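/- Suppose (X_i, K_i)_{i=1}^N and (Y_i, L_i)_{i=1}^N satisfy the coupled Riccati system and H has full column rank. Then for every i ∈ {1,…,N} and every s ∈ ℂ not in the spectrum of 𝒜 nor in the spectrum of A^{KL}_{k,k−1} for any k = 1,…,i, the following factorization of the closed-loop transfer function from control input to performance output holds: (ℱ(sI − 𝒜)^{-1}ℬ + H)·E^{↓i} = U_1(s)·U_2(s)⋯U_i(s)·M_i^{-1}(s), where M_i^{-1}(s) := (Ψ_{↓i}^{↓i})^{1/2} − (Ψ_{↓i}^{↓i})^{1/2} 𝒦_i (sI − 𝒜)^{-1} ℬE^{↓i} and E^{↓i} is taken in the m-partition. -/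

import Mathlib

open Matrix

namespace TriLQG

noncomputable section

variable {N : ℕ}

/-- Index type of an `(N+1)`-block partitioned coordinate space with block sizes `d`. -/
abbrev Idx {N : ℕ} (d : Fin (N+1) → ℕ) : Type := Σ k : Fin (N+1), Fin (d k)

/-- Indices belonging to blocks `i, i+1, …, N`. -/
abbrev IdxGe {N : ℕ} (d : Fin (N+1) → ℕ) (i : Fin (N+1)) : Type := {x : Idx d // i ≤ x.1}

/-- Indices belonging to blocks `0, 1, …, i`. -/
abbrev IdxLe {N : ℕ} (d : Fin (N+1) → ℕ) (i : Fin (N+1)) : Type := {x : Idx d // x.1 ≤ i}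

/-- The selector matrix `E^{↓i}` (columns of the identity for blocks `i,…,N`). -/
def padGe (d : Fin (N+1) → ℕ) (i : Fin (N+1)) : Matrix (Idx d) (IdxGe d i) ℝ :=
  Matrix.of fun r c => if r = (c : Idx d) then 1 else 0

/-- The selector matrix `E^{↑i}` (columns of the identity for blocks `0,…,i`). -/
def padLe (d : Fin (N+1) → ℕ) (i : Fin (N+1)) : Matrix (Idx d) (IdxLe d i) ℝ :=
  Matrix.of fun r c => if r = (c : Idx d) then 1 else 0

/-- Complexification of a real matrix. -/
def mc {α β : Type*} (M : Matrix α β ℝ) : Matrix α β ℂ := M.map Complex.ofReal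

/-- A real square matrix is Hurwitz if its (complex) spectrum lies in the open left half plane. -/
def IsHurwitz {t : Type*} [Fintype t] [DecidableEq t] (M : Matrix t t ℝ) : Prop :=
  ∀ z ∈ spectrum ℂ (mc M), z.re < 0

open Classical in
/-- The (unique, symmetric, positive semidefinite) square root of a positive semidefinite
real matrix; junk value `0` if the matrix is not positive semidefinite. -/
def msqrt {t : Type*} [Fintype t] [DecidableEq t] (M : Matrix t t ℝ) : Matrix t t ℝ :=
  if h : M.PosSemidef then
    (h.1.eigenvectorUnitary : Matrix t t ℝ) * diagonal (Real.sqrt ∘ h.1.eigenvalues) *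
      (star h.1.eigenvectorUnitary : Matrix t t ℝ)
  else 0

/-- Full column rank. -/
def FullColRank {α β : Type*} [Fintype β] {R : Type*} [CommRing R] (M : Matrix α β R) : Prop :=
  M.rank = Fintype.card β

/-- Full row rank. -/
def FullRowRank {α β : Type*} [Fintype α] [Fintype β] {R : Type*} [CommRing R]
    (M : Matrix α β R) : Prop :=
  M.rank = Fintype.card α

/-- `ARE_p(Ã,B̃,F̃,H̃)` together with its gain: `X` is a symmetric solution of the
control algebraic Riccati equation and `K` is the associated gain. -/
def AREp {n' m' q' : Type*} [Fintype n'] [Fintype m'] [Fintype q'] [DecidableEq m']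
    (At : Matrix n' n' ℝ) (Bt : Matrix n' m' ℝ) (Ft : Matrix q' n' ℝ) (Ht : Matrix q' m' ℝ)
    (X : Matrix n' n' ℝ) (K : Matrix m' n' ℝ) : Prop :=
  X.IsSymm ∧
  Atᵀ * X + X * At - (X * Bt + Ftᵀ * Ht) * (Htᵀ * Ht)⁻¹ * (X * Bt + Ftᵀ * Ht)ᵀ + Ftᵀ * Ft = 0 ∧
  K = -((Htᵀ * Ht)⁻¹ * (X * Bt + Ftᵀ * Ht)ᵀ)

/-- `ARE_d(Ã,C̃,W̃,Ṽ)` together with its gain. -/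
def AREd {n' p' r' : Type*} [Fintype n'] [Fintype p'] [Fintype r'] [DecidableEq p']
    (At : Matrix n' n' ℝ) (Ct : Matrix p' n' ℝ) (Wt : Matrix n' r' ℝ) (Vt : Matrix p' r' ℝ)
    (Y : Matrix n' n' ℝ) (L : Matrix n' p' ℝ) : Prop :=
  Y.IsSymm ∧
  At * Y + Y * Atᵀ - (Ct * Y + Vt * Wtᵀ)ᵀ * (Vt * Vtᵀ)⁻¹ * (Ct * Y + Vt * Wtᵀ) + Wt * Wtᵀ = 0 ∧
  L = -((Ct * Y + Vt * Wtᵀ)ᵀ * (Vt * Vtᵀ)⁻¹)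

/-- Lower block triangular sparsity. -/
def IsLBT {N : ℕ} {d e : Fin (N+1) → ℕ} (M : Matrix (Idx d) (Idx e) ℝ) : Prop :=
  ∀ a : Idx d, ∀ b : Idx e, a.1 < b.1 → M a b = 0

/-- The data of the `(N+1)`-player triangular plant. -/
structure Plant (N : ℕ) where
  nd : Fin (N+1) → ℕ
  md : Fin (N+1) → ℕ
  pd : Fin (N+1) → ℕ
  q : ℕ
  r : ℕ
  A : Matrix (Idx nd) (Idx nd) ℝ
  B : Matrix (Idx nd) (Idx md) ℝ
  C : Matrix (Idx pd) (Idx nd) ℝ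
  F : Matrix (Fin q) (Idx nd) ℝ
  H : Matrix (Fin q) (Idx md) ℝ
  W : Matrix (Idx nd) (Fin r) ℝ
  V : Matrix (Idx pd) (Fin r) ℝ

variable (P : Plant N)

/-- family of controller gains `K_i ∈ ℝ^{(m_i+⋯+m_N)×n}` -/
abbrev KGains (P : Plant N) : Type := (i : Fin (N+1)) → Matrix (IdxGe P.md i) (Idx P.nd) ℝ

/-- family of observer gains `L_i ∈ ℝ^{n×(p_1+⋯+p_i)}` -/
abbrev LGains (P : Plant N) : Type := (i : Fin (N+1)) → Matrix (Idx P.nd) (IdxLe P.pd i) ℝ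

/-- family of symmetric matrices `X_i` (or `Y_i`) -/
abbrev SFam (P : Plant N) : Type := Fin (N+1) → Matrix (Idx P.nd) (Idx P.nd) ℝ

def Bdown (i : Fin (N+1)) : Matrix (Idx P.nd) (IdxGe P.md i) ℝ := P.B.submatrix id Subtype.val
def Hdown (i : Fin (N+1)) : Matrix (Fin P.q) (IdxGe P.md i) ℝ := P.H.submatrix id Subtype.val
def Cup (i : Fin (N+1)) : Matrix (IdxLe P.pd i) (Idx P.nd) ℝ := P.C.submatrix Subtype.val id
def Vup (i : Fin (N+1)) : Matrix (IdxLe P.pd i) (Fin P.r) ℝ := P.V.submatrix Subtype.val id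

/-- `Ψ_{↓i}^{↓i} = (H^{↓i})ᵀ H^{↓i}` -/
def Psidd (i : Fin (N+1)) : Matrix (IdxGe P.md i) (IdxGe P.md i) ℝ := (Hdown P i)ᵀ * Hdown P i

/-- `Φ_{↑j}^{↑j} = V_{↑j} (V_{↑j})ᵀ` -/
def Phiuu (j : Fin (N+1)) : Matrix (IdxLe P.pd j) (IdxLe P.pd j) ℝ := Vup P j * (Vup P j)ᵀ

/-- The coupled Riccati system (2a)–(2d) of the paper. -/
def Coupled (X : SFam P) (K : KGains P) (Y : SFam P) (L : LGains P) : Prop :=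
  AREp P.A (Bdown P 0) P.F (Hdown P 0) (X 0) (K 0) ∧
  (∀ t : Fin N,
    AREp (P.A + L t.castSucc * Cup P t.castSucc) (Bdown P t.succ)
      (-(Hdown P t.castSucc * K t.castSucc)) (Hdown P t.succ) (X t.succ) (K t.succ)) ∧
  AREd P.A (Cup P (Fin.last N)) P.W (Vup P (Fin.last N)) (Y (Fin.last N)) (L (Fin.last N)) ∧
  (∀ t : Fin N,
    AREd (P.A + Bdown P t.succ * K t.succ) (Cup P t.castSucc)
      (-(L t.succ * Vup P t.succ)) (Vup P t.castSucc) (Y t.castSucc) (L t.castSucc))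

/-- `A^{KL}_{k+1,k}` for `k = 0, 1, …, N+1` (`k = 0` gives `A+BK_1`,
`k = N+1` gives `A+L_N C`). -/
def AKL (K : KGains P) (L : LGains P) (k : Fin (N+2)) : Matrix (Idx P.nd) (Idx P.nd) ℝ :=
  if hk : k.1 < N + 1 then
    (if k.1 = 0 then P.A + Bdown P 0 * K 0
     else
       have h1 : k.1 - 1 < N + 1 := by omega
       P.A + Bdown P ⟨k.1, hk⟩ * K ⟨k.1, hk⟩ +
         L ⟨k.1 - 1, h1⟩ * Cup P ⟨k.1 - 1, h1⟩)
  else P.A + L (Fin.last N) * Cup P (Fin.last N)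

/-- index set of the `n(N+1)`-dimensional controller state space -/
abbrev CtrIx {N : ℕ} (nd : Fin (N+1) → ℕ) : Type := Fin (N+1) × Idx nd

/-- index set of the `n(N+2)`-dimensional closed-loop state space:
`N+1` controller blocks and one plant block -/
abbrev BigIx {N : ℕ} (nd : Fin (N+1) → ℕ) : Type := CtrIx nd ⊕ Idx nd

/-- the incidence matrix `ζ` -/
def zetaN (nd : Fin (N+1) → ℕ) : Matrix (CtrIx nd) (CtrIx nd) ℝ :=
  Matrix.of fun x y => if y.1 ≤ x.1 ∧ x.2 = y.2 then 1 else 0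

/-- block diagonal matrix -/
def blkDiagN {nd : Fin (N+1) → ℕ} (f : Fin (N+1) → Matrix (Idx nd) (Idx nd) ℝ) :
    Matrix (CtrIx nd) (CtrIx nd) ℝ :=
  Matrix.of fun x y => if x.1 = y.1 then f x.1 x.2 y.2 else 0

/-- `A_K` of the optimal controller realization -/
def AK (K : KGains P) (L : LGains P) : Matrix (CtrIx P.nd) (CtrIx P.nd) ℝ :=
  blkDiagN (fun _ => P.A) + blkDiagN (fun k => L k * Cup P k) +
    zetaN P.nd * blkDiagN (fun k => Bdown P k * K k) * (zetaN P.nd)⁻¹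

/-- `B_K` of the optimal controller realization -/
def BK (L : LGains P) : Matrix (CtrIx P.nd) (Idx P.pd) ℝ :=
  Matrix.of fun x c => -((L x.1 * (padLe P.pd x.1)ᵀ) x.2 c)

/-- `C_K` of the optimal controller realization -/
def CK (K : KGains P) : Matrix (Idx P.md) (CtrIx P.nd) ℝ :=
  (Matrix.of fun rr (x : CtrIx P.nd) => (padGe P.md x.1 * K x.1) rr x.2) * (zetaN P.nd)⁻¹

/-- closed-loop `𝒜` -/
def Acal (K : KGains P) (L : LGains P) : Matrix (BigIx P.nd) (BigIx P.nd) ℝ :=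
  Matrix.fromBlocks (AK P K L) (BK P L * P.C) (P.B * CK P K) P.A

/-- closed-loop `ℬ` -/
def Bcal : Matrix (BigIx P.nd) (Idx P.md) ℝ :=
  Matrix.of fun x j => Sum.elim (fun _ => (0:ℝ)) (fun a => P.B a j) x

/-- closed-loop `𝒲` -/
def Wcal (L : LGains P) : Matrix (BigIx P.nd) (Fin P.r) ℝ :=
  Matrix.of fun x j => Sum.elim (fun y => (BK P L * P.V) y j) (fun a => P.W a j) x

/-- closed-loop `ℱ` -/
def Fcal (K : KGains P) : Matrix (Fin P.q) (BigIx P.nd) ℝ :=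
  Matrix.of fun i x => Sum.elim (fun y => (P.H * CK P K) i y) (fun a => P.F i a) x

/-- closed-loop `𝒞` -/
def Ccal : Matrix (Idx P.pd) (BigIx P.nd) ℝ :=
  Matrix.of fun i x => Sum.elim (fun _ => (0:ℝ)) (fun a => P.C i a) x

/-- block index of a closed-loop index -/
def blkOf {nd : Fin (N+1) → ℕ} (x : BigIx nd) : Fin (N+2) :=
  Sum.elim (fun y => y.1.castSucc) (fun _ => Fin.last (N+1)) x

/-- within-block state of a closed-loop index -/
def stOf {nd : Fin (N+1) → ℕ} (x : BigIx nd) : Idx nd :=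
  Sum.elim Prod.snd id x

/-- the incidence matrix `ζ̄` of the `(N+2)`-fold block structure -/
def zetaBar (nd : Fin (N+1) → ℕ) : Matrix (BigIx nd) (BigIx nd) ℝ :=
  Matrix.of fun x y => if blkOf y ≤ blkOf x ∧ stOf x = stOf y then 1 else 0

/-- embedding of a within-block index into the closed-loop index set, at block `k` -/
def emb {nd : Fin (N+1) → ℕ} (k : Fin (N+2)) (a : Idx nd) : BigIx nd :=
  if h : k.1 < N + 1 then Sum.inl (⟨⟨k.1, h⟩, a⟩ : CtrIx nd) else Sum.inr a

/-- `𝒦_i` of the paper (eq. (9)). -/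
def Kcal (K : KGains P) (i : Fin (N+1)) : Matrix (IdxGe P.md i) (BigIx P.nd) ℝ :=
  (padGe P.md i)ᵀ *
    Matrix.of fun (rr : Idx P.md) (x : BigIx P.nd) =>
      Sum.elim
        (fun y : CtrIx P.nd =>
          if hl : y.1.1 < N then
            (if y.1 < i then (0:ℝ)
             else
               have h1 : y.1.1 + 1 < N + 1 := by omega
               (padGe P.md ⟨y.1.1 + 1, h1⟩ * K ⟨y.1.1 + 1, h1⟩ -
                   padGe P.md y.1 * K y.1) rr y.2)
          else (-(padGe P.md (Fin.last N) * K (Fin.last N))) rr y.2)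
        (fun a => (padGe P.md i * K i) rr a) x

/-- `ℒ_j` of the paper (eq. (10)). -/
def Lcal (L : LGains P) (j : Fin (N+1)) : Matrix (BigIx P.nd) (IdxLe P.pd j) ℝ :=
  Matrix.of fun x c =>
    Sum.elim
      (fun y : CtrIx P.nd =>
        if y.1 < j then (L y.1 * (padLe P.pd y.1)ᵀ * padLe P.pd j) y.2 c else (L j) y.2 c)
      (fun a => (L j) a c) x

/-- `J̃_i` of the paper (eq. (11)). -/
def Jtil (nd : Fin (N+1) → ℕ) (i : Fin (N+1)) : Matrix (Idx nd) (BigIx nd) ℝ :=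
  Matrix.of fun a x =>
    Sum.elim
      (fun y : CtrIx nd => if 0 < i.1 ∧ y.1.1 = i.1 - 1 ∧ a = y.2 then (1:ℝ) else 0)
      (fun b => if a = b then (-1:ℝ) else 0) x

/-- `Ĵ_j` of the paper (eq. (11)). -/
def Jhat (nd : Fin (N+1) → ℕ) (j : Fin (N+1)) : Matrix (BigIx nd) (Idx nd) ℝ :=
  Matrix.of fun x a =>
    Sum.elim
      (fun y : CtrIx nd => if j < y.1 ∧ y.2 = a then (1:ℝ) else 0)
      (fun b => if b = a then (1:ℝ) else 0) x

/-- `Γ_i = −(Ψ_{↓i}^{↓i})^{1/2} 𝒦_i` for `i ≥ 1` (Lemma 2 of the paper). -/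
def Gam (K : KGains P) (i : Fin (N+1)) : Matrix (IdxGe P.md i) (BigIx P.nd) ℝ :=
  -(msqrt (Psidd P i) * Kcal P K i)

/-- `Λ_j = −ℒ_j (Φ_{↑j}^{↑j})^{1/2}` for `j ≤ N` (Lemma 2 of the paper). -/
def Lam (L : LGains P) (j : Fin (N+1)) : Matrix (BigIx P.nd) (IdxLe P.pd j) ℝ :=
  -(Lcal P L j * msqrt (Phiuu P j))

/-- the inner factor `U_1(s)` -/
def Uone (K : KGains P) (L : LGains P) (s : ℂ) : Matrix (Fin P.q) (IdxGe P.md 0) ℂ :=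
  mc (P.F + Hdown P 0 * K 0) * (s • 1 - mc (AKL P K L 0))⁻¹ * mc (Bdown P 0) *
      (mc (msqrt (Psidd P 0)))⁻¹ +
    mc (Hdown P 0) * (mc (msqrt (Psidd P 0)))⁻¹

/-- the inner factor `U_{t+2}(s)` (paper indexing), mapping block level `t+1` to `t` -/
def Usucc (K : KGains P) (L : LGains P) (t : Fin N) (s : ℂ) :
    Matrix (IdxGe P.md t.castSucc) (IdxGe P.md t.succ) ℂ :=
  mc (msqrt (Psidd P t.castSucc)) *
      mc ((padGe P.md t.castSucc)ᵀ *
        (padGe P.md t.succ * K t.succ - padGe P.md t.castSucc * K t.castSucc)) *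
      (s • 1 - mc (AKL P K L t.succ.castSucc))⁻¹ * mc (Bdown P t.succ) *
      (mc (msqrt (Psidd P t.succ)))⁻¹ +
    mc (msqrt (Psidd P t.castSucc)) * mc ((padGe P.md t.castSucc)ᵀ * padGe P.md t.succ) *
      (mc (msqrt (Psidd P t.succ)))⁻¹

/-- the co-inner factor `V_{N+1}(s)` (paper indexing: the last one) -/
def Vlast (K : KGains P) (L : LGains P) (s : ℂ) :
    Matrix (IdxLe P.pd (Fin.last N)) (Fin P.r) ℂ :=
  (mc (msqrt (Phiuu P (Fin.last N))))⁻¹ * mc (Cup P (Fin.last N)) *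
      (s • 1 - mc (AKL P K L (Fin.last (N+1))))⁻¹ *
      mc (P.W + L (Fin.last N) * Vup P (Fin.last N)) +
    (mc (msqrt (Phiuu P (Fin.last N))))⁻¹ * mc (Vup P (Fin.last N))

/-- the co-inner factor `V_{t+1}(s)` (paper indexing), for `t+1 ≤ N` -/
def Vmid (K : KGains P) (L : LGains P) (t : Fin N) (s : ℂ) :
    Matrix (IdxLe P.pd t.castSucc) (IdxLe P.pd t.succ) ℂ :=
  (mc (msqrt (Phiuu P t.castSucc)))⁻¹ * mc (Cup P t.castSucc) *
      (s • 1 - mc (AKL P K L t.succ.castSucc))⁻¹ *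
      mc ((L t.castSucc * (padLe P.pd t.castSucc)ᵀ - L t.succ * (padLe P.pd t.succ)ᵀ) *
        padLe P.pd t.succ * msqrt (Phiuu P t.succ)) +
    (mc (msqrt (Phiuu P t.castSucc)))⁻¹ *
      mc ((padLe P.pd t.castSucc)ᵀ * padLe P.pd t.succ * msqrt (Phiuu P t.succ))

/-- the product `U_1(s) U_2(s) ⋯ U_i(s)` -/
def Uprod (K : KGains P) (L : LGains P) (s : ℂ) :
    (i : Fin (N+1)) → Matrix (Fin P.q) (IdxGe P.md i) ℂ :=
  Fin.induction (motive := fun i => Matrix (Fin P.q) (IdxGe P.md i) ℂ)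
    (Uone P K L s) (fun t ih => ih * Usucc P K L t s)

/-- the product `V_j(s) V_{j+1}(s) ⋯ V_{N+1}(s)` -/
def Vprod (K : KGains P) (L : LGains P) (s : ℂ) :
    (j : Fin (N+1)) → Matrix (IdxLe P.pd j) (Fin P.r) ℂ :=
  Fin.reverseInduction (motive := fun j => Matrix (IdxLe P.pd j) (Fin P.r) ℂ)
    (Vlast P K L s) (fun t ih => Vmid P K L t s * ih)

/-- closed-loop transfer function `G11(s) = ℱ(sI−𝒜)⁻¹𝒲` -/
def G11 (K : KGains P) (L : LGains P) (s : ℂ) : Matrix (Fin P.q) (Fin P.r) ℂ :=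
  mc (Fcal P K) * (s • 1 - mc (Acal P K L))⁻¹ * mc (Wcal P L)

/-- closed-loop transfer function `G12(s) = ℱ(sI−𝒜)⁻¹ℬ + H` -/
def G12 (K : KGains P) (L : LGains P) (s : ℂ) : Matrix (Fin P.q) (Idx P.md) ℂ :=
  mc (Fcal P K) * (s • 1 - mc (Acal P K L))⁻¹ * mc (Bcal P) + mc P.H

/-- closed-loop transfer function `G21(s) = 𝒞(sI−𝒜)⁻¹𝒲 + V` -/
def G21 (K : KGains P) (L : LGains P) (s : ℂ) : Matrix (Idx P.pd) (Fin P.r) ℂ :=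
  mc (Ccal P) * (s • 1 - mc (Acal P K L))⁻¹ * mc (Wcal P L) + mc P.V

end

end TriLQG

/-!
Write `R = (sI − 𝒜)⁻¹` and `Φ_i = 𝒦_i R ℬ E^{↓i}`. The selector `J̃_i` of the paper (minus the
plant state plus the controller copy of block `i−1`) intertwines the closed loop, perturbed by
the feedback `ℬ E^{↓i} 𝒦_i`, with `A^{KL}_{i,i−1}`, and `J̃_i ℬ = −B`; hence
`J̃_i R ℬ E^{↓i} = −(sI − A^{KL}_{i,i−1})⁻¹ B^{↓i} (I − Φ_i)`. Combined with
`ℱ + H E^{↓1} 𝒦_1 = −(F + H K_1) J̃_1` and the telescoping identity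
`E_{↓i−1} E^{↓i} 𝒦_i = 𝒦_{i−1} − E_{↓i−1}(E^{↓i} K_i − E^{↓i−1} K_{i−1}) J̃_i`, this gives by
induction on `i` that `G₁₂(s) E^{↓i} = Û_1 ⋯ Û_i (I − Φ_i)`, where `Û_k` is `U_k` without the
normalizations by `(Ψ_{↓k}^{↓k})^{1/2}`. These telescope in `U_1 ⋯ U_i`, since full column
rank of `H` makes every `Ψ_{↓k}^{↓k}` invertible.
-/

theorem Fin.sum_ite_val_eq {n : ℕ} {M : Type*} [AddCommMonoid M] (g : ℕ → M) (k : ℕ) :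
    ∑ j : Fin n, (if j.1 = k then g j.1 else 0) = if k < n then g k else 0 := by
  rw [Fin.sum_univ_eq_sum_range (fun j => if j = k then g j else 0), Finset.sum_ite_eq']
  simp

namespace Matrix

section Resolvent

variable {R : Type*} [CommRing R] {m n p q r : Type*}
  [Fintype m] [Fintype n] [Fintype p] [Fintype r]

theorem isUnit_det_smul_one_sub [DecidableEq n] {M : Matrix n n R} {s : R}
    (h : s ∉ spectrum R M) : IsUnit (s • 1 - M).det := by
  rw [spectrum.notMem_iff, Algebra.algebraMap_eq_smul_one] at h
  exact (isUnit_iff_isUnit_det _).mp h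

theorem mul_resolvent_of_intertwine [DecidableEq m] [DecidableEq n] {T : Matrix m n R}
    {A : Matrix n n R} {A' : Matrix m m R} {G : Matrix m n R} (s : R)
    (h : T * A + G = A' * T) (hA : IsUnit (s • 1 - A).det) (hA' : IsUnit (s • 1 - A').det) :
    T * (s • 1 - A)⁻¹ = (s • 1 - A')⁻¹ * (T - G * (s • 1 - A)⁻¹) := by
  have hT : T * (s • 1 - A) - G = (s • 1 - A') * T := by
    rw [Matrix.mul_sub, Matrix.sub_mul, ← h, Matrix.mul_smul, Matrix.smul_mul, Matrix.mul_one,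
      Matrix.one_mul]
    abel
  calc T * (s • 1 - A)⁻¹ = (s • 1 - A')⁻¹ * ((s • 1 - A') * T * (s • 1 - A)⁻¹) := by
        rw [Matrix.mul_assoc, ← Matrix.mul_assoc _ (s • 1 - A'), Matrix.nonsing_inv_mul _ hA',
          Matrix.one_mul]
    _ = _ := by
        rw [← hT, Matrix.sub_mul, Matrix.mul_assoc, Matrix.mul_nonsing_inv _ hA, Matrix.mul_one]

theorem cascade_init {Fc : Matrix q r R} {H : Matrix q p R} {E : Matrix p m R}
    {Kc : Matrix m r R} {F' : Matrix q n R} {T : Matrix n r R} {X : Matrix n m R}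
    {W : Matrix r m R} [DecidableEq m] (hF : Fc + H * (E * Kc) = F' * T)
    (hT : T * W = X * (1 - Kc * W)) :
    Fc * W + H * E = (F' * X + H * E) * (1 - Kc * W) := by
  rw [Matrix.add_mul, Matrix.mul_assoc, ← hT, ← Matrix.mul_assoc, ← hF, Matrix.mul_sub,
    Matrix.mul_one, Matrix.add_mul, Matrix.mul_assoc H, Matrix.mul_assoc H, Matrix.mul_assoc E]
  abel

theorem cascade_step {Kc : Matrix m r R} {Kc' : Matrix p r R} {J : Matrix m p R}
    {D : Matrix m n R} {T : Matrix n r R} {X : Matrix n p R} {W : Matrix r m R}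
    [DecidableEq m] [DecidableEq p] (hK : J * Kc' = Kc + D * T)
    (hT : T * (W * J) = X * (1 - Kc' * (W * J))) :
    (1 - Kc * W) * J = (D * X + J) * (1 - Kc' * (W * J)) := by
  rw [Matrix.add_mul, Matrix.mul_assoc, ← hT, Matrix.mul_sub J, Matrix.mul_one,
    ← Matrix.mul_assoc J, hK, Matrix.add_mul, Matrix.sub_mul, Matrix.one_mul,
    Matrix.mul_assoc Kc, Matrix.mul_assoc D]
  abel

end Resolvent

section Partitioned

variable {R : Type*} {α β γ ι κ m₁ m₂ n₁ n₂ : Type*}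

def blockRow (F : ι → Matrix β κ R) : Matrix β (ι × κ) R :=
  of fun r y => F y.1 r y.2

theorem blockRow_zero [Zero R] : blockRow (fun _ => 0 : ι → Matrix β κ R) = 0 := rfl

theorem neg_blockRow [Neg R] (F : ι → Matrix β κ R) :
    -blockRow F = blockRow fun l => -F l := rfl

theorem blockRow_add [Add R] (F G : ι → Matrix β κ R) :
    blockRow F + blockRow G = blockRow fun l => F l + G l := rfl

theorem blockRow_sub [Sub R] (F G : ι → Matrix β κ R) :
    blockRow F - blockRow G = blockRow fun l => F l - G l := rfl

theorem mul_blockRow [NonUnitalNonAssocSemiring R] [Fintype β] (X : Matrix α β R)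
    (F : ι → Matrix β κ R) : X * blockRow F = blockRow fun l => X * F l := by
  ext r y; simp [blockRow, mul_apply]

theorem blockRow_single_mul [NonAssocSemiring R] [Fintype ι] [Fintype κ] [DecidableEq ι]
    [DecidableEq κ] (t : ι) (X : Matrix (ι × κ) γ R) :
    blockRow (fun l => if l = t then (1 : Matrix κ κ R) else 0) * X =
      X.submatrix (fun a => (t, a)) id := by
  ext a c
  rw [mul_apply, Fintype.sum_prod_type, Fintype.sum_eq_single t fun l hl => by simp [blockRow, hl]]
  simp [blockRow, one_apply]

theorem fromRows_add [Add R] (A₁ B₁ : Matrix m₁ κ R) (A₂ B₂ : Matrix m₂ κ R) :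
    fromRows A₁ A₂ + fromRows B₁ B₂ = fromRows (A₁ + B₁) (A₂ + B₂) := by
  ext (_ | _) _ <;> rfl

theorem fromCols_add [Add R] (A₁ B₁ : Matrix β n₁ R) (A₂ B₂ : Matrix β n₂ R) :
    fromCols A₁ A₂ + fromCols B₁ B₂ = fromCols (A₁ + B₁) (A₂ + B₂) := by
  ext _ (_ | _) <;> rfl

theorem fromCols_sub [Sub R] (A₁ B₁ : Matrix β n₁ R) (A₂ B₂ : Matrix β n₂ R) :
    fromCols A₁ A₂ - fromCols B₁ B₂ = fromCols (A₁ - B₁) (A₂ - B₂) := by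
  ext _ (_ | _) <;> rfl

end Partitioned

end Matrix

namespace TriLQG

open Matrix

variable {N : ℕ}

section Selectors

variable (d : Fin (N+1) → ℕ)

theorem padGe_eq_submatrix_one (i : Fin (N+1)) :
    padGe d i = (1 : Matrix (Idx d) (Idx d) ℝ).submatrix id Subtype.val := by
  ext r c; simp [padGe, one_apply]

theorem mul_padGe {β : Type*} (X : Matrix β (Idx d) ℝ) (i : Fin (N+1)) :
    X * padGe d i = X.submatrix id Subtype.val := by
  rw [padGe_eq_submatrix_one]; exact mul_submatrix_one (Equiv.refl _) _ X

theorem transpose_padGe_mul {β : Type*} (i : Fin (N+1)) (X : Matrix (Idx d) β ℝ) :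
    (padGe d i)ᵀ * X = X.submatrix Subtype.val id := by
  rw [padGe_eq_submatrix_one, transpose_submatrix, transpose_one]
  exact one_submatrix_mul _ (Equiv.refl _) X

theorem transpose_padLe_mul {β : Type*} (i : Fin (N+1)) (X : Matrix (Idx d) β ℝ) :
    (padLe d i)ᵀ * X = X.submatrix Subtype.val id := by
  have : padLe d i = (1 : Matrix (Idx d) (Idx d) ℝ).submatrix id Subtype.val := by
    ext r c; simp [padLe, one_apply]
  rw [this, transpose_submatrix, transpose_one]
  exact one_submatrix_mul _ (Equiv.refl _) X

theorem transpose_padGe_mul_padGe (i : Fin (N+1)) : (padGe d i)ᵀ * padGe d i = 1 := by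
  rw [transpose_padGe_mul, padGe_eq_submatrix_one, submatrix_submatrix]
  exact submatrix_one _ Subtype.val_injective

theorem padGe_mul_apply {β : Type*} (i : Fin (N+1)) (Y : Matrix (IdxGe d i) β ℝ)
    (r : Idx d) (b : β) : (padGe d i * Y) r b = if h : i ≤ r.1 then Y ⟨r, h⟩ b else 0 := by
  rw [mul_apply]
  split_ifs with h
  · rw [Fintype.sum_eq_single ⟨r, h⟩ fun c hc => by
      have hrc : r ≠ c := fun e => hc (Subtype.ext e.symm)
      simp [padGe, hrc]]
    simp [padGe]
  · refine Finset.sum_eq_zero fun c _ => ?_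
    have hrc : r ≠ c := fun e => h (e ▸ c.2)
    simp [padGe, hrc]

theorem padGe_mul_transpose_padGe_mul {β : Type*} (i : Fin (N+1)) {X : Matrix (Idx d) β ℝ}
    (hX : ∀ r z, r.1 < i → X r z = 0) : padGe d i * ((padGe d i)ᵀ * X) = X := by
  ext r z
  rw [padGe_mul_apply, transpose_padGe_mul]
  split_ifs with h
  · rfl
  · exact (hX r z (not_le.mp h)).symm

theorem padGe_mul_transpose_padGe_mul_padGe {i i' : Fin (N+1)} (h : i ≤ i') :
    padGe d i * ((padGe d i)ᵀ * padGe d i') = padGe d i' :=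
  padGe_mul_transpose_padGe_mul d i fun r c hr => by
    have hrc : r ≠ c := fun e => (lt_of_lt_of_le hr h).not_ge (e ▸ c.2)
    simp [padGe, hrc]

end Selectors

section Zeta

variable (nd : Fin (N+1) → ℕ)

def zetaInv : Matrix (CtrIx nd) (CtrIx nd) ℝ :=
  of fun x y => (if x = y then 1 else 0) - (if x.1.1 = y.1.1 + 1 ∧ x.2 = y.2 then 1 else 0)

theorem blockRow_mul_zetaInv {β : Type*} (f : ℕ → Matrix β (Idx nd) ℝ) (hf : f (N+1) = 0) :
    blockRow (fun l : Fin (N+1) => f l) * zetaInv nd =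
      blockRow fun l : Fin (N+1) => f l - f (l+1) := by
  ext r y
  simp only [mul_apply, zetaInv, blockRow, of_apply, mul_sub, mul_ite, mul_one, mul_zero,
    Finset.sum_sub_distrib, Fintype.sum_prod_type, Prod.ext_iff, ite_and]
  simp only [Finset.sum_ite_irrel, Finset.sum_ite_eq', Finset.mem_univ, if_true,
    Finset.sum_const_zero, Fin.sum_ite_val_eq (fun k => f k r y.2), Matrix.sub_apply]
  split_ifs with h
  · rfl
  · rw [show y.1.1 + 1 = N + 1 by omega, hf, Matrix.zero_apply]

theorem zetaN_mul_zetaInv : zetaN nd * zetaInv nd = 1 := by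
  set col : ℕ → Matrix (CtrIx nd) (Idx nd) ℝ := fun l => of fun x b =>
    if l ≤ x.1.1 ∧ x.2 = b then 1 else 0
  have hcol : col (N+1) = 0 := by
    ext x b; simp only [col, of_apply, Matrix.zero_apply, ite_eq_right_iff]; omega
  have hzeta : zetaN nd = blockRow fun l : Fin (N+1) => col l := by
    refine Matrix.ext fun x y => ?_
    simp only [zetaN, blockRow, col, of_apply, Fin.le_def, eq_comm]
  rw [hzeta, blockRow_mul_zetaInv nd col hcol]
  refine Matrix.ext fun x y => ?_
  by_cases h2 : x.2 = y.2 <;>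
    simp only [blockRow, col, of_apply, Matrix.sub_apply, one_apply, Prod.ext_iff, Fin.ext_iff,
      h2, and_true, and_false, if_false, sub_zero]
  split_ifs <;> first | omega | norm_num

theorem zetaN_mul_blkDiagN_submatrix (f : Fin (N+1) → Matrix (Idx nd) (Idx nd) ℝ)
    (t : Fin (N+1)) : (zetaN nd * blkDiagN f).submatrix (fun a => (t, a)) id =
      blockRow fun l => if l ≤ t then f l else 0 := by
  refine Matrix.ext fun a y => ?_
  rw [submatrix_apply, mul_apply, Fintype.sum_eq_single (y.1, a) fun x hx => ?_]
  · simp only [zetaN, blkDiagN, blockRow, of_apply, and_true, id_eq, if_true]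
    split_ifs <;> simp
  · by_cases hx1 : x.1 = y.1
    · have : a ≠ x.2 := fun e => hx (Prod.ext hx1 e.symm)
      simp only [zetaN, of_apply, this, and_false, if_false, zero_mul]
    · simp only [blkDiagN, of_apply, id_eq, hx1, if_false, mul_zero]

theorem inv_zetaN : (zetaN nd)⁻¹ = zetaInv nd :=
  inv_eq_right_inv (zetaN_mul_zetaInv nd)

end Zeta

section Gains

variable {P : Plant N} (K : KGains P) (L : LGains P)

/-- `E^{↓l} K_l`, indexed by `l : ℕ` and extended by `0` beyond the last block, so that the
differences `gainRow K (l+1) - gainRow K l` need no case split at `l = N`. -/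
def gainRow (l : ℕ) : Matrix (Idx P.md) (Idx P.nd) ℝ :=
  if h : l < N + 1 then padGe P.md ⟨l, h⟩ * K ⟨l, h⟩ else 0

theorem gainRow_val (l : Fin (N+1)) : gainRow K l = padGe P.md l * K l := by
  rw [gainRow, dif_pos l.isLt]

theorem gainRow_succ_last : gainRow K (N+1) = 0 := by
  simp [gainRow]

theorem gainRow_apply_of_lt {l : ℕ} {r : Idx P.md} (h : r.1.1 < l) (b : Idx P.nd) :
    gainRow K l r b = 0 := by
  unfold gainRow
  split_ifs with hl
  · rw [padGe_mul_apply, dif_neg fun hle => by rw [Fin.le_def] at hle; simp at hle; omega]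
  · rfl

theorem Bdown_mul (i : Fin (N+1)) : Bdown P i * K i = P.B * gainRow K i := by
  rw [gainRow_val, ← Matrix.mul_assoc, mul_padGe]; rfl

theorem Hdown_mul (i : Fin (N+1)) : Hdown P i * K i = P.H * gainRow K i := by
  rw [gainRow_val, ← Matrix.mul_assoc, mul_padGe]; rfl

theorem CK_eq : CK P K = blockRow fun l : Fin (N+1) => gainRow K l - gainRow K (l+1) := by
  rw [CK, inv_zetaN, ← blockRow_mul_zetaInv _ (gainRow K) (gainRow_succ_last K)]
  congr 1
  refine Matrix.ext fun r y => ?_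
  simp [blockRow, gainRow_val]

theorem AK_submatrix (t : Fin (N+1)) :
    (AK P K L).submatrix (fun a => (t, a)) id = blockRow fun l =>
      (if l = t then P.A + L t * Cup P t else 0) +
        ((if l ≤ t then P.B * gainRow K l else 0) -
          (if l.1 + 1 ≤ t.1 then P.B * gainRow K (l+1) else 0)) := by
  set h : ℕ → Matrix (Idx P.nd) (Idx P.nd) ℝ := fun l =>
    if l ≤ t.1 then P.B * gainRow K l else 0
  have hrow : (zetaN P.nd * (blkDiagN fun k => Bdown P k * K k) * zetaInv P.nd).submatrix
      (fun a => (t, a)) id = blockRow fun l : Fin (N+1) => h l - h (l+1) := by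
    rw [← blockRow_mul_zetaInv _ h (if_neg (by omega))]
    rw [submatrix_mul _ _ _ id _ Function.bijective_id, submatrix_id_id,
      zetaN_mul_blkDiagN_submatrix]
    simp only [Bdown_mul, h, ← Fin.le_def]
  refine Matrix.ext fun a y => ?_
  have hrow_apply := congrFun (congrFun hrow a) y
  rw [submatrix_apply] at hrow_apply
  rw [submatrix_apply, AK, inv_zetaN, Matrix.add_apply, Matrix.add_apply, hrow_apply]
  simp only [blkDiagN, blockRow, of_apply, h, id_eq, ← Fin.le_def, Matrix.add_apply]
  by_cases hy : y.1 = t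
  · subst hy; simp only [if_true, Matrix.add_apply]
  · simp only [hy, Ne.symm hy, if_false, zero_add, Matrix.zero_apply]

theorem BK_mul_C_submatrix (t : Fin (N+1)) :
    (BK P L * P.C).submatrix (fun a => (t, a)) id = -(L t * Cup P t) := by
  calc (BK P L * P.C).submatrix (fun a => (t, a)) id
      = (BK P L).submatrix (fun a => (t, a)) id * P.C := rfl
    _ = -(L t * (padLe P.pd t)ᵀ) * P.C := rfl
    _ = _ := by rw [Matrix.neg_mul, Matrix.mul_assoc, transpose_padLe_mul]; rfl

/-- `E^{↓i} 𝒦_i` in block form (see `padGe_mul_Kcal`). -/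
def kRow (i : Fin (N+1)) : Matrix (Idx P.md) (BigIx P.nd) ℝ :=
  fromCols (blockRow fun l => if l < i then 0 else gainRow K (l+1) - gainRow K l) (gainRow K i)

theorem Kcal_eq (i : Fin (N+1)) : Kcal P K i = (padGe P.md i)ᵀ * kRow K i := by
  unfold Kcal
  congr 1
  refine Matrix.ext fun r x => ?_
  rcases x with ⟨l, b⟩ | b
  · by_cases hl : l.1 < N
    · have hsucc : gainRow K (l.1 + 1) = padGe P.md ⟨l.1 + 1, Nat.succ_lt_succ hl⟩ *
          K ⟨l.1 + 1, Nat.succ_lt_succ hl⟩ := dif_pos _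
      simp only [kRow, blockRow, fromCols_apply_inl, of_apply, Sum.elim_inl, dif_pos hl, hsucc,
        gainRow_val]
      split_ifs <;> rfl
    · have hlast : l = Fin.last N := Fin.ext (by simp; omega)
      subst hlast
      simp [kRow, blockRow, gainRow_val, gainRow_succ_last, not_lt.mpr (Fin.le_last i)]
  · simp [kRow, gainRow_val]

theorem padGe_mul_Kcal (i : Fin (N+1)) : padGe P.md i * Kcal P K i = kRow K i := by
  rw [Kcal_eq]
  refine padGe_mul_transpose_padGe_mul _ i fun r x hr => ?_
  have hr : r.1.1 < i.1 := hr
  rcases x with ⟨l, b⟩ | b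
  · simp only [kRow, blockRow, fromCols_apply_inl, of_apply]
    split_ifs with hl
    · rfl
    · rw [Matrix.sub_apply, gainRow_apply_of_lt K (by omega), gainRow_apply_of_lt K (by omega),
        sub_zero]
  · exact gainRow_apply_of_lt K hr b

end Gains

section Intertwining

variable {P : Plant N} (K : KGains P) (L : LGains P)

theorem Jtil_zero (nd : Fin (N+1) → ℕ) : Jtil nd 0 = fromCols 0 (-1) := by
  refine Matrix.ext fun a x => ?_
  rcases x with y | b
  · simp [Jtil]
  · simp only [Jtil, of_apply, Sum.elim_inr, fromCols_apply_inr, Matrix.neg_apply, one_apply]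
    split_ifs <;> simp

theorem Jtil_succ (nd : Fin (N+1) → ℕ) (t : Fin N) :
    Jtil nd t.succ = fromCols (blockRow fun l => if l = t.castSucc then 1 else 0) (-1) := by
  refine Matrix.ext fun a x => ?_
  rcases x with ⟨l, b⟩ | b
  · by_cases h : t.1 = l.1 <;> simp [Jtil, blockRow, one_apply, Fin.ext_iff, eq_comm, h]
  · simp only [Jtil, of_apply, Sum.elim_inr, fromCols_apply_inr, Matrix.neg_apply, one_apply]
    split_ifs <;> simp

theorem Acal_eq : Acal P K L =
    fromRows (fromCols (AK P K L) (BK P L * P.C)) (fromCols (P.B * CK P K) P.A) :=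
  (fromRows_fromCols_eq_fromBlocks _ _ _ _).symm

theorem Bcal_eq : Bcal P = fromRows 0 P.B := by
  refine Matrix.ext fun x j => ?_
  rcases x with y | b <;> rfl

theorem Fcal_eq : Fcal P K = fromCols (P.H * CK P K) P.F := by
  refine Matrix.ext fun r x => ?_
  rcases x with y | b <;> rfl

theorem Jtil_mul_Bcal (i : Fin (N+1)) : Jtil P.nd i * Bcal P = -P.B := by
  refine Matrix.ext fun a c => ?_
  simp [mul_apply, Jtil, Bcal]

theorem closedLoop_eq (i : Fin (N+1)) :
    Acal P K L + Bcal P * kRow K i = fromRows (fromCols (AK P K L) (BK P L * P.C))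
      (fromCols (blockRow fun l => if l < i then P.B * (gainRow K l - gainRow K (l+1)) else 0)
        (P.A + P.B * gainRow K i)) := by
  rw [Acal_eq, Bcal_eq, fromRows_mul, Matrix.zero_mul, kRow, CK_eq, mul_fromCols, mul_blockRow,
    mul_blockRow, fromRows_add, fromCols_add, blockRow_add, add_zero]
  congr 3
  funext l
  split_ifs
  · rw [Matrix.mul_zero, add_zero]
  · rw [← Matrix.mul_add, sub_add_sub_cancel, sub_self, Matrix.mul_zero]

theorem AKL_zero : AKL P K L 0 = P.A + P.B * gainRow K 0 := by
  simp [AKL, Bdown_mul]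

theorem AKL_succ (t : Fin N) : AKL P K L t.succ.castSucc =
    P.A + P.B * gainRow K (t.1 + 1) + L t.castSucc * Cup P t.castSucc := by
  rw [AKL, dif_pos (by simp), if_neg (by simp)]
  simp [Bdown_mul]
  rfl

theorem Jtil_mul_closedLoop (i : Fin (N+1)) :
    Jtil P.nd i * (Acal P K L + Bcal P * (padGe P.md i * Kcal P K i)) =
      AKL P K L i.castSucc * Jtil P.nd i := by
  rw [padGe_mul_Kcal, closedLoop_eq]
  cases i using Fin.cases with
  | zero =>
    rw [Jtil_zero, fromCols_mul_fromRows, mul_fromCols, Fin.castSucc_zero, AKL_zero]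
    simp [blockRow_zero]
  | succ t =>
    rw [Jtil_succ, fromCols_mul_fromRows, mul_fromCols, mul_fromCols, blockRow_single_mul,
      mul_fromCols, blockRow_single_mul, AK_submatrix, BK_mul_C_submatrix, AKL_succ]
    simp only [Matrix.neg_mul, Matrix.one_mul, Matrix.mul_neg, Matrix.mul_one, neg_blockRow,
      fromCols_add, blockRow_add, mul_blockRow, mul_ite, Matrix.mul_zero, Matrix.mul_sub,
      Fin.val_succ]
    congr 1
    · congr 1
      funext l
      split_ifs <;> simp_all [Fin.ext_iff, Fin.le_def, Fin.lt_def] <;> first | omega | abel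
    · abel

theorem Jtil_mul_Acal_sub (i : Fin (N+1)) :
    Jtil P.nd i * Acal P K L - Bdown P i * Kcal P K i = AKL P K L i.castSucc * Jtil P.nd i := by
  rw [← Jtil_mul_closedLoop, Matrix.mul_add, ← Matrix.mul_assoc, Jtil_mul_Bcal, Matrix.neg_mul,
    ← Matrix.mul_assoc, mul_padGe, sub_eq_add_neg]
  rfl

theorem Fcal_add_H_mul_Kcal :
    Fcal P K + P.H * (padGe P.md 0 * Kcal P K 0) = -((P.F + Hdown P 0 * K 0) * Jtil P.nd 0) := by
  rw [padGe_mul_Kcal, Fcal_eq, kRow, Jtil_zero, CK_eq, mul_fromCols, fromCols_add, mul_blockRow,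
    mul_blockRow, blockRow_add, Hdown_mul, mul_fromCols]
  simp only [Fin.not_lt_zero, if_false, ← Matrix.mul_add, sub_add_sub_cancel, sub_self,
    Matrix.mul_zero, blockRow_zero, Matrix.mul_neg, Matrix.mul_one, fromCols_neg, neg_zero]
  rw [neg_neg]

theorem kRow_succ (t : Fin N) :
    kRow K t.succ =
      kRow K t.castSucc - (gainRow K t.succ - gainRow K t.castSucc) * Jtil P.nd t.succ := by
  rw [kRow, kRow, Jtil_succ, mul_fromCols, mul_blockRow, fromCols_sub, blockRow_sub]
  simp only [Matrix.mul_one, Matrix.mul_neg, sub_neg_eq_add, Fin.val_succ, Fin.val_castSucc]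
  congr 2
  · funext l
    split_ifs <;> simp_all [Fin.ext_iff, Fin.lt_def] <;> omega
  · abel

theorem transpose_padGe_mul_padGe_mul_Kcal_succ (t : Fin N) :
    (padGe P.md t.castSucc)ᵀ * padGe P.md t.succ * Kcal P K t.succ = Kcal P K t.castSucc -
      (padGe P.md t.castSucc)ᵀ *
          (padGe P.md t.succ * K t.succ - padGe P.md t.castSucc * K t.castSucc) *
        Jtil P.nd t.succ := by
  rw [Matrix.mul_assoc, padGe_mul_Kcal, kRow_succ, Kcal_eq, ← gainRow_val, ← gainRow_val,
    Matrix.mul_sub, Matrix.mul_assoc]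

end Intertwining

section Complexify

variable {α β γ : Type*}

theorem mc_mul [Fintype β] (A : Matrix α β ℝ) (B : Matrix β γ ℝ) : mc (A * B) = mc A * mc B :=
  Matrix.map_mul (f := Complex.ofRealHom)

theorem mc_add (A B : Matrix α β ℝ) : mc (A + B) = mc A + mc B :=
  Matrix.map_add _ Complex.ofReal_add A B

theorem mc_sub (A B : Matrix α β ℝ) : mc (A - B) = mc A - mc B :=
  Matrix.map_sub _ Complex.ofReal_sub A B

theorem mc_neg (A : Matrix α β ℝ) : mc (-A) = -mc A :=
  Matrix.map_neg _ Complex.ofReal_neg A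

theorem isUnit_det_mc [Fintype α] [DecidableEq α] {M : Matrix α α ℝ} (h : IsUnit M.det) :
    IsUnit (mc M).det := by
  have : (mc M).det = Complex.ofRealHom M.det := (RingHom.map_det Complex.ofRealHom M).symm
  exact this ▸ h.map Complex.ofRealHom

end Complexify

theorem FullColRank.injective_mulVec {α β K : Type*} [Fintype α] [Fintype β] [Field K]
    {M : Matrix β α K} (h : FullColRank M) : Function.Injective M.mulVec := by
  have hsum := LinearMap.finrank_range_add_finrank_ker M.mulVecLin
  rw [show Module.finrank K (LinearMap.range M.mulVecLin) = Fintype.card α from h,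
    Module.finrank_fintype_fun_eq_card, add_eq_left, Submodule.finrank_eq_zero] at hsum
  exact LinearMap.ker_eq_bot.mp hsum

section SquareRoot

variable {α : Type*} [Fintype α] [DecidableEq α]

theorem msqrt_mul_self {M : Matrix α α ℝ} (h : M.PosSemidef) : msqrt M * msqrt M = M := by
  rw [msqrt, dif_pos h]
  set U := (h.1.eigenvectorUnitary : Matrix α α ℝ)
  have hU : star U * U = 1 := Unitary.star_mul_self_of_mem h.1.eigenvectorUnitary.2
  have hD : diagonal (Real.sqrt ∘ h.1.eigenvalues) * diagonal (Real.sqrt ∘ h.1.eigenvalues) =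
      diagonal (RCLike.ofReal ∘ h.1.eigenvalues) := by
    rw [diagonal_mul_diagonal]
    congr 1; funext k
    simp [Real.mul_self_sqrt (h.eigenvalues_nonneg k)]
  conv_rhs => rw [h.1.spectral_theorem, Unitary.conjStarAlgAut_apply]
  simp only [Matrix.mul_assoc]
  rw [← Matrix.mul_assoc (star U) U, hU, Matrix.one_mul, ← Matrix.mul_assoc (diagonal _), hD]

theorem isUnit_det_msqrt {M : Matrix α α ℝ} (h : M.PosSemidef) (hM : IsUnit M.det) :
    IsUnit (msqrt M).det :=
  isUnit_of_mul_isUnit_left (y := (msqrt M).det) (by rwa [← det_mul, msqrt_mul_self h])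

end SquareRoot

section Factorization

variable {P : Plant N} (K : KGains P) (L : LGains P) (s : ℂ)

theorem isUnit_det_Psidd (hH : FullColRank P.H) (i : Fin (N+1)) : IsUnit (Psidd P i).det := by
  have hE : Function.Injective (padGe P.md i).mulVec := fun x y hxy => by
    simpa [mulVec_mulVec, transpose_padGe_mul_padGe] using
      congrArg ((padGe P.md i)ᵀ *ᵥ ·) hxy
  have hHi : LinearMap.ker (Hdown P i).mulVecLin = ⊥ := by
    refine LinearMap.ker_eq_bot.mpr fun x y hxy => hE (hH.injective_mulVec ?_)
    rw [mulVec_mulVec, mulVec_mulVec, mul_padGe]; exact hxy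
  rw [← isUnit_iff_isUnit_det, ← mulVec_injective_iff_isUnit, ← coe_mulVecLin,
    ← LinearMap.ker_eq_bot, Psidd, ker_mulVecLin_transpose_mul_self, hHi]

theorem isUnit_det_mc_msqrt_Psidd (hH : FullColRank P.H) (i : Fin (N+1)) :
    IsUnit (mc (msqrt (Psidd P i))).det := by
  have hpsd : (Psidd P i).PosSemidef := by
    simpa [Psidd, conjTranspose_eq_transpose_of_trivial] using
      posSemidef_conjTranspose_mul_self (Hdown P i)
  exact isUnit_det_mc (isUnit_det_msqrt hpsd (isUnit_det_Psidd hH i))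

noncomputable def stateResponse (i : Fin (N+1)) : Matrix (BigIx P.nd) (IdxGe P.md i) ℂ :=
  (s • 1 - mc (Acal P K L))⁻¹ * mc (Bcal P * padGe P.md i)

theorem Jtil_mul_stateResponse (i : Fin (N+1)) (hs : IsUnit (s • 1 - mc (Acal P K L)).det)
    (hi : IsUnit (s • 1 - mc (AKL P K L i.castSucc)).det) :
    mc (Jtil P.nd i) * stateResponse K L s i =
      -((s • 1 - mc (AKL P K L i.castSucc))⁻¹ * mc (Bdown P i)) *
        (1 - mc (Kcal P K i) * stateResponse K L s i) := by
  have hint : mc (Jtil P.nd i) * mc (Acal P K L) + -(mc (Bdown P i) * mc (Kcal P K i)) =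
      mc (AKL P K L i.castSucc) * mc (Jtil P.nd i) := by
    rw [← mc_mul, ← mc_mul, ← mc_mul, ← sub_eq_add_neg, ← mc_sub, Jtil_mul_Acal_sub]
  have hJB : mc (Jtil P.nd i) * mc (Bcal P * padGe P.md i) = -mc (Bdown P i) := by
    rw [← mc_mul, ← Matrix.mul_assoc, Jtil_mul_Bcal, Matrix.neg_mul, mul_padGe, mc_neg]; rfl
  rw [stateResponse, ← Matrix.mul_assoc, mul_resolvent_of_intertwine s hint hs hi,
    Matrix.mul_assoc, Matrix.sub_mul, hJB]
  simp only [Matrix.mul_sub, Matrix.neg_mul, Matrix.mul_one, Matrix.mul_assoc, sub_neg_eq_add,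
    neg_add_eq_sub]

theorem stateResponse_succ (t : Fin N) : stateResponse K L s t.succ =
    stateResponse K L s t.castSucc * mc ((padGe P.md t.castSucc)ᵀ * padGe P.md t.succ) := by
  rw [stateResponse, stateResponse, Matrix.mul_assoc, ← mc_mul, Matrix.mul_assoc,
    padGe_mul_transpose_padGe_mul_padGe _ (Fin.castSucc_le_succ t)]

theorem Uprod_zero : Uprod P K L s 0 = Uone P K L s :=
  Fin.induction_zero _ _

theorem Uprod_succ (t : Fin N) :
    Uprod P K L s t.succ = Uprod P K L s t.castSucc * Usucc P K L t s :=
  Fin.induction_succ _ _ t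

theorem Uone_mul_msqrt (hH : FullColRank P.H) :
    Uone P K L s * mc (msqrt (Psidd P 0)) =
      mc (P.F + Hdown P 0 * K 0) * ((s • 1 - mc (AKL P K L 0))⁻¹ * mc (Bdown P 0)) +
        mc (Hdown P 0) := by
  rw [Uone, Matrix.add_mul, Matrix.mul_assoc _ _ (mc (msqrt (Psidd P 0))),
    Matrix.mul_assoc _ _ (mc (msqrt (Psidd P 0))),
    nonsing_inv_mul _ (isUnit_det_mc_msqrt_Psidd hH 0), Matrix.mul_one, Matrix.mul_one,
    Matrix.mul_assoc]

theorem Usucc_mul_msqrt (hH : FullColRank P.H) (t : Fin N) :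
    Usucc P K L t s * mc (msqrt (Psidd P t.succ)) = mc (msqrt (Psidd P t.castSucc)) *
      (mc ((padGe P.md t.castSucc)ᵀ *
          (padGe P.md t.succ * K t.succ - padGe P.md t.castSucc * K t.castSucc)) *
        ((s • 1 - mc (AKL P K L t.succ.castSucc))⁻¹ * mc (Bdown P t.succ)) +
        mc ((padGe P.md t.castSucc)ᵀ * padGe P.md t.succ)) := by
  rw [Usucc, Matrix.add_mul, Matrix.mul_assoc _ _ (mc (msqrt (Psidd P t.succ))),
    Matrix.mul_assoc _ _ (mc (msqrt (Psidd P t.succ))),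
    nonsing_inv_mul _ (isUnit_det_mc_msqrt_Psidd hH t.succ), Matrix.mul_one, Matrix.mul_one,
    Matrix.mul_add]
  simp only [Matrix.mul_assoc]

theorem G12_mul_padGe (hH : FullColRank P.H) (hs : IsUnit (s • 1 - mc (Acal P K L)).det)
    (j : Fin (N+1)) (hj : ∀ k ≤ j, IsUnit (s • 1 - mc (AKL P K L k.castSucc)).det) :
    G12 P K L s * mc (padGe P.md j) =
      Uprod P K L s j * mc (msqrt (Psidd P j)) *
        (1 - mc (Kcal P K j) * stateResponse K L s j) := by
  induction j using Fin.induction with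
  | zero =>
    have hF : mc (Fcal P K) + mc P.H * (mc (padGe P.md 0) * mc (Kcal P K 0)) =
        -mc (P.F + Hdown P 0 * K 0) * mc (Jtil P.nd 0) := by
      rw [← mc_mul, ← mc_mul, ← mc_add, Fcal_add_H_mul_Kcal, ← mc_neg, ← mc_mul, Matrix.neg_mul]
    have hT := Jtil_mul_stateResponse K L s 0 hs (hj 0 le_rfl)
    have hHE : mc P.H * mc (padGe P.md 0) = mc (Hdown P 0) := by rw [← mc_mul, mul_padGe]; rfl
    have hG : G12 P K L s * mc (padGe P.md 0) =
        mc (Fcal P K) * stateResponse K L s 0 + mc P.H * mc (padGe P.md 0) := by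
      rw [G12, Matrix.add_mul, Matrix.mul_assoc, Matrix.mul_assoc, ← mc_mul]; rfl
    rw [Fin.castSucc_zero] at hT
    rw [hG, Uprod_zero, Uone_mul_msqrt K L s hH, cascade_init hF hT, Matrix.neg_mul,
      Matrix.mul_neg, neg_neg, hHE]
  | succ t ih =>
    set J := mc ((padGe P.md t.castSucc)ᵀ * padGe P.md t.succ)
    set D := mc ((padGe P.md t.castSucc)ᵀ *
      (padGe P.md t.succ * K t.succ - padGe P.md t.castSucc * K t.castSucc))
    have hK : J * mc (Kcal P K t.succ) = mc (Kcal P K t.castSucc) + -D * mc (Jtil P.nd t.succ) := by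
      rw [← mc_mul, ← mc_neg, ← mc_mul, ← mc_add, Matrix.neg_mul, ← sub_eq_add_neg,
        ← transpose_padGe_mul_padGe_mul_Kcal_succ]
    have hT := Jtil_mul_stateResponse K L s t.succ hs (hj t.succ le_rfl)
    rw [stateResponse_succ] at hT
    have hGJ : G12 P K L s * mc (padGe P.md t.succ) =
        G12 P K L s * mc (padGe P.md t.castSucc) * J := by
      rw [Matrix.mul_assoc, ← mc_mul,
        padGe_mul_transpose_padGe_mul_padGe _ (Fin.castSucc_le_succ t)]
    rw [hGJ, ih fun k hk => hj k (hk.trans (Fin.castSucc_le_succ t)), Matrix.mul_assoc,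
      cascade_step hK hT, Uprod_succ, Matrix.mul_assoc _ (Usucc P K L t s),
      Usucc_mul_msqrt K L s hH, Matrix.neg_mul, Matrix.mul_neg, neg_neg, stateResponse_succ,
      Matrix.mul_assoc, Matrix.mul_assoc, Matrix.mul_assoc (mc (msqrt (Psidd P t.castSucc)))]

end Factorization

theorem stmt8_general {N : ℕ} (P : Plant N)
    (hH : FullColRank P.H)
    (K : KGains P) (L : LGains P)
    (i : Fin (N+1)) (s : ℂ)
    (hs : s ∉ spectrum ℂ (mc (Acal P K L)))
    (hsk : ∀ k : Fin (N+2), k.1 ≤ i.1 → s ∉ spectrum ℂ (mc (AKL P K L k))) :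
    G12 P K L s * mc (padGe P.md i) =
      Uprod P K L s i *
        (mc (msqrt (Psidd P i)) -
          mc (msqrt (Psidd P i)) * mc (Kcal P K i) * (s • 1 - mc (Acal P K L))⁻¹ *
            mc (Bcal P * padGe P.md i)) := by
  rw [G12_mul_padGe K L s hH (isUnit_det_smul_one_sub hs) i
    fun k hk => isUnit_det_smul_one_sub (hsk k.castSucc hk), stateResponse, Matrix.mul_assoc,
    Matrix.mul_sub, Matrix.mul_one]
  simp only [Matrix.mul_assoc]

/-- factorization of the closed-loop transfer function from control input to
performance output: `G12(s) E^{↓i} = U_1(s) ⋯ U_i(s) M_i⁻¹(s)` with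
`M_i⁻¹(s) = (Ψ_{↓i}^{↓i})^{1/2} − (Ψ_{↓i}^{↓i})^{1/2} 𝒦_i (sI−𝒜)⁻¹ ℬ E^{↓i}`. -/
theorem stmt8 {N : ℕ} (P : Plant N)
    (hdim : ∀ k : Fin (N+1), 0 < P.nd k ∧ 0 < P.md k ∧ 0 < P.pd k)
    (hA : IsLBT P.A) (hB : IsLBT P.B) (hC : IsLBT P.C)
    (hH : FullColRank P.H)
    (X Y : SFam P) (K : KGains P) (L : LGains P)
    (hcoup : Coupled P X K Y L)
    (i : Fin (N+1)) (s : ℂ)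
    (hs : s ∉ spectrum ℂ (mc (Acal P K L)))
    (hsk : ∀ k : Fin (N+2), k.1 ≤ i.1 → s ∉ spectrum ℂ (mc (AKL P K L k))) :
    G12 P K L s * mc (padGe P.md i) =
      Uprod P K L s i *
        (mc (msqrt (Psidd P i)) -
          mc (msqrt (Psidd P i)) * mc (Kcal P K i) * (s • 1 - mc (Acal P K L))⁻¹ *
            mc (Bcal P * padGe P.md i)) :=
  stmt8_general P hH K L i s hs hsk

end TriLQG
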